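/- arXiv:0712.2390 — 2 statements merged into one kernel-verified Lean document; each statement's English description precedes it below -/
import Mathlib

section
/- Suppose λ and μ are k-empty partitions with μ ⊵ λ and 𝔏_k(λ) = 𝔏_k(μ). Then every partition ξ with μ ⊵ ξ ⊵ λ is k-empty and satisfies 𝔏_k(ξ) = 𝔏_k(μ). -/
open scoped BigOperators

def IsPartition (f : ℕ → ℕ) : Prop :=
  (∀ ⦃i j : ℕ⦄, i ≤ j → f j ≤ f i) ∧ ∃ N : ℕ, ∀ i, N ≤ i → f i = 0

noncomputable def conj (f : ℕ → ℕ) (i : ℕ) : ℕ := Nat.card {j : ℕ // i + 1 ≤ f j}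

def betaSet (f : ℕ → ℕ) (r : ℕ) : Multiset ℕ :=
  (Multiset.range r).map fun i => f i + (r - 1 - i)

/-- e-extension of a multiset: z gets multiplicity |B ∩ {z, z+e, z+2e, …}|. -/
def eExt (e : ℕ) (B : Multiset ℕ) : Multiset ℕ :=
  B.bind fun b => (Multiset.range (b / e + 1)).map fun j => b - j * e

def runnerCount (e d : ℕ) (B : Multiset ℕ) : ℕ :=
  Multiset.card (B.filter fun b => b % e = d)

/-- Beta-multiset of the e-core: slide all beads up their runners. -/
def coreBeta (e : ℕ) (B : Multiset ℕ) : Multiset ℕ :=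
  (Multiset.range e).bind fun j =>
    (Multiset.range (runnerCount e j B)).map fun i => j + i * e

/-- Weight multiset 𝔚: records the start of each single-step slide; equivalently
determined by 𝔛 = 𝔛(core) ⊔ 𝔚. -/
def weightMS (e : ℕ) (B : Multiset ℕ) : Multiset ℕ :=
  eExt e B - eExt e (coreBeta e B)

def eWeight (e : ℕ) (B : Multiset ℕ) : ℕ := Multiset.card (weightMS e B)

def DomMS (I J : Multiset ℕ) : Prop := Multiset.Rel (fun a b => b ≤ a) I J

/-- refined dominance order: same e-core and 𝔛^e_r(g) ⪰ 𝔛^e_r(f). -/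
def Dominates (e r : ℕ) (g f : ℕ → ℕ) : Prop :=
  coreBeta e (betaSet g r) = coreBeta e (betaSet f r) ∧
    DomMS (eExt e (betaSet g r)) (eExt e (betaSet f r))
/-- k-empty: all beads on runner d = (r+k) mod e are as high as possible. -/
def KEmpty (e k r : ℕ) (f : ℕ → ℕ) : Prop :=
  ∀ b ∈ betaSet f r, b % e = (r + k) % e →
    b < (r + k) % e + runnerCount e ((r + k) % e) (betaSet f r) * e

/-- 𝔏_k(λ): number of elements (with multiplicity) of 𝔛^e_r(λ) greater than d + c·e. -/
def Lk (e k r : ℕ) (f : ℕ → ℕ) : ℕ :=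
  Multiset.card <| (eExt e (betaSet f r)).filter fun x =>
    (r + k) % e + runnerCount e ((r + k) % e) (betaSet f r) * e < x

/-- Monotone counting along a `DomMS` pairing. -/
lemma card_filter_le_of_rel {I J : Multiset ℕ}
    (h : Multiset.Rel (fun a b => b ≤ a) I J)
    (p : ℕ → Prop) [DecidablePred p] (hp : ∀ ⦃a b : ℕ⦄, b ≤ a → p b → p a) :
    Multiset.card (J.filter p) ≤ Multiset.card (I.filter p) := by
  induction h with
  | zero => simp
  | @cons a b I J hab _ ih =>
      rw [Multiset.filter_cons, Multiset.filter_cons, Multiset.card_add, Multiset.card_add]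
      by_cases hb : p b
      · have ha : p a := hp hab hb
        simp only [ha, hb, if_pos]
        simpa using ih
      · by_cases ha : p a <;> simp only [ha, hb, if_pos, if_neg, not_false_iff] <;> simp <;> omega

lemma countP_bind (s : Multiset ℕ) (f : ℕ → Multiset ℕ) (p : ℕ → Prop) [DecidablePred p] :
    Multiset.countP p (s.bind f) = (s.map fun a => Multiset.countP p (f a)).sum := by
  induction s using Multiset.induction with
  | empty => simp
  | cons a s ih => simp [Multiset.cons_bind, Multiset.countP_add, ih]

lemma runnerCount_coreBeta (e j : ℕ) (B : Multiset ℕ) (hj : j < e) :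
    runnerCount e j (coreBeta e B) = runnerCount e j B := by
  unfold runnerCount coreBeta
  rw [← Multiset.countP_eq_card_filter, countP_bind]
  have hmap : ∀ j' ∈ Multiset.range e,
      (Multiset.countP (fun b => b % e = j)
        ((Multiset.range (runnerCount e j' B)).map fun i => j' + i * e)) =
      if j' = j then runnerCount e j' B else 0 := by
    intro j' hj'
    rw [Multiset.mem_range] at hj'
    rw [Multiset.countP_map]
    have hmod : ∀ i : ℕ, (j' + i * e) % e = j' := by
      intro i
      rw [Nat.add_mul_mod_self_right, Nat.mod_eq_of_lt hj']
    by_cases hjj : j' = j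
    · simp only [hjj, if_pos]
      rw [Multiset.filter_eq_self.2 (by intro a _; simp [hmod, hjj, Nat.mod_eq_of_lt hj])]
      simp
    · simp only [hjj, if_neg, not_false_iff]
      rw [Multiset.filter_eq_nil.2 (by intro a _; simp [hmod, hjj])]
      simp
  rw [Multiset.map_congr rfl hmap]
  have : (Multiset.range e).map (fun j' => if j' = j then runnerCount e j' B else 0)
      = (Finset.range e).val.map (fun j' => if j' = j then runnerCount e j' B else 0) := rfl
  rw [this]
  have : ((Finset.range e).val.map fun j' => if j' = j then runnerCount e j' B else 0).sum
      = ∑ j' ∈ Finset.range e, (if j' = j then runnerCount e j' B else 0) := rfl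
  rw [this, Finset.sum_ite_eq' (Finset.range e) j (fun j' => runnerCount e j' B),
    if_pos (Finset.mem_range.2 hj)]
  rfl

lemma mem_eExt {e z : ℕ} {B : Multiset ℕ} :
    z ∈ eExt e B ↔ ∃ b ∈ B, ∃ j, j < b / e + 1 ∧ b - j * e = z := by
  unfold eExt
  simp only [Multiset.mem_bind, Multiset.mem_map, Multiset.mem_range]

lemma card_filter_split (t : ℕ) (s : Multiset ℕ) :
    Multiset.card (s.filter fun z => t ≤ z) =
      Multiset.card (s.filter fun z => t < z) + s.count t := by
  induction s using Multiset.induction with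
  | empty => simp
  | cons a s ih =>
      rw [Multiset.filter_cons, Multiset.filter_cons, Multiset.count_cons,
        Multiset.card_add, Multiset.card_add, ih]
      by_cases h1 : t ≤ a <;> by_cases h2 : t < a <;> by_cases h3 : t = a <;>
        first
          | omega
          | (simp only [h1, h2, h3, if_pos, if_neg, not_false_iff] <;> simp <;> omega)

/-- If `f` is k-empty then the threshold value `T = d + c·e` is not in the e-extension. -/
lemma T_not_mem_eExt {e k r : ℕ} (he : 0 < e) (f : ℕ → ℕ) (hkf : KEmpty e k r f) :
    ((r + k) % e + runnerCount e ((r + k) % e) (betaSet f r) * e) ∉ eExt e (betaSet f r) := by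
  intro hmem
  set d := (r + k) % e with hd
  set c := runnerCount e d (betaSet f r) with hc
  obtain ⟨b, hb, j, _, hbj⟩ := mem_eExt.1 hmem
  have hje : j * e ≤ b := by
    calc j * e ≤ (b / e) * e := Nat.mul_le_mul_right e (by omega)
    _ ≤ b := Nat.div_mul_le_self b e
  have hbeq : b = (d + c * e) + j * e := by omega
  have hmod : b % e = d := by
    rw [hbeq, Nat.add_mul_mod_self_right, Nat.add_mul_mod_self_right,
      Nat.mod_eq_of_lt (Nat.mod_lt _ he)]
  have := hkf b hb hmod
  rw [← hd, ← hc] at this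
  omega

/-- if λ, μ are k-empty, μ ⊵ λ and 𝔏_k(λ) = 𝔏_k(μ), then every
partition ξ with μ ⊵ ξ ⊵ λ is k-empty with 𝔏_k(ξ) = 𝔏_k(μ). -/
theorem stmt9 (e k r : ℕ) (he : 2 ≤ e) (hk : k < e) (f g : ℕ → ℕ)
    (hf : IsPartition f) (hg : IsPartition g)
    (hrf : conj f 0 ≤ r) (hrg : conj g 0 ≤ r)
    (hkf : KEmpty e k r f) (hkg : KEmpty e k r g)
    (hdom : Dominates e r g f) (hL : Lk e k r f = Lk e k r g)
    (x : ℕ → ℕ) (hx : IsPartition x) (hrx : conj x 0 ≤ r)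
    (h1 : Dominates e r g x) (h2 : Dominates e r x f) :
    KEmpty e k r x ∧ Lk e k r x = Lk e k r g := by
  have he0 : 0 < e := by omega
  set d := (r + k) % e with hd
  have hde : d < e := Nat.mod_lt _ he0
  -- common runner count
  have hcx : runnerCount e d (betaSet x r) = runnerCount e d (betaSet f r) := by
    rw [← runnerCount_coreBeta e d (betaSet x r) hde, h2.1,
      runnerCount_coreBeta e d (betaSet f r) hde]
  have hcg : runnerCount e d (betaSet g r) = runnerCount e d (betaSet f r) := by
    rw [← runnerCount_coreBeta e d (betaSet g r) hde, hdom.1,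
      runnerCount_coreBeta e d (betaSet f r) hde]
  set c := runnerCount e d (betaSet f r) with hc
  set T := d + c * e with hT
  -- Lk as counts with the common threshold
  have hLf : Lk e k r f = Multiset.card ((eExt e (betaSet f r)).filter fun z => T < z) := rfl
  have hLg : Lk e k r g = Multiset.card ((eExt e (betaSet g r)).filter fun z => T < z) := by
    unfold Lk; rw [← hd, hcg]
  have hLx : Lk e k r x = Multiset.card ((eExt e (betaSet x r)).filter fun z => T < z) := by
    unfold Lk; rw [← hd, hcx]
  have hmono : ∀ a b : ℕ, b ≤ a → T < b → T < a := fun a b h1 h2 => lt_of_lt_of_le h2 h1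
  have hxg : Lk e k r x ≤ Lk e k r g := by
    rw [hLx, hLg]
    exact card_filter_le_of_rel h1.2 _ (fun a b hab hb => hmono a b hab hb)
  have hfx : Lk e k r f ≤ Lk e k r x := by
    rw [hLx, hLf]
    exact card_filter_le_of_rel h2.2 _ (fun a b hab hb => hmono a b hab hb)
  have hLxg : Lk e k r x = Lk e k r g := by omega
  refine ⟨?_, hLxg⟩
  -- k-emptiness of x: show T is not in eExt of x
  have hTg : T ∉ eExt e (betaSet g r) := by
    have := T_not_mem_eExt he0 g hkg
    rwa [← hd, hcg] at this
  have hcountg : (eExt e (betaSet g r)).count T = 0 := Multiset.count_eq_zero.2 hTg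
  have hle : Multiset.card ((eExt e (betaSet x r)).filter fun z => T ≤ z)
      ≤ Multiset.card ((eExt e (betaSet g r)).filter fun z => T ≤ z) :=
    card_filter_le_of_rel h1.2 _ (fun a b hab hb => le_trans hb hab)
  have hsplitg := card_filter_split T (eExt e (betaSet g r))
  have hsplitx := card_filter_split T (eExt e (betaSet x r))
  have hcountx : (eExt e (betaSet x r)).count T = 0 := by
    rw [hLx, hLg] at hLxg
    omega
  have hTx : T ∉ eExt e (betaSet x r) := fun hm =>
    absurd hcountx (by simpa using Multiset.count_pos.2 hm |>.ne')
  -- conclude KEmpty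
  intro b hb hbmod
  rw [← hd, hcx, ← hT]
  by_contra hlt
  push_neg at hlt
  apply hTx
  -- b ≡ d (mod e), b ≥ T, so T = b - j*e for j = (b-T)/e
  have hTd : T % e = d := by rw [hT, Nat.add_mul_mod_self_right, Nat.mod_eq_of_lt hde]
  have hdvd : e ∣ (b - T) := by
    have h1 : b % e = T % e := by rw [hbmod, hTd]
    exact (Nat.modEq_iff_dvd' hlt).1 h1.symm
  obtain ⟨j, hj⟩ := hdvd
  rw [Nat.mul_comm] at hj
  have hje : j * e ≤ b := by omega
  refine mem_eExt.2 ⟨b, hb, j, ?_, ?_⟩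
  · have : j ≤ b / e := (Nat.le_div_iff_mul_le he0).2 hje
    omega
  · omega
end

section
/- Suppose λ is a partition with e-core κ and e-weight w, and k ∈ {0,…,e-1}. Then λ is k-empty if and only if λ' is (e-1-k)-empty; and when this holds, 𝔏_k(λ) + 𝔏_{e-1-k}(λ') = 𝔏_k(κ) + 𝔏_{e-1-k}(κ') + w. -/
open scoped BigOperators

def partOfBeta (C : Multiset ℕ) : ℕ → ℕ := fun i =>
  ((C.sort (· ≤ ·)).reverse.getD i 0) - (Multiset.card C - 1 - i)

/-!
Write `B = betaSet f r ⊆ [0, n)` with `n = r + s`. The beta-set of `λ'` is the complement of `B`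
in `[0, n)` reflected by `x ↦ n - 1 - x`, and runner `d` becomes runner `(n + e - 1 - d) % e`.
The multiplicity of `z` in `𝔛(B)` is the number of beads on the runner of `z` at or above `z`;
that of `n + e - 1 - z` in `𝔛(λ')` is the number of gaps of `B` below `z` on the same runner.
Their difference therefore depends only on the runner sizes, which `λ` shares with its core `κ`.
Hence `𝔛(λ) = 𝔛(κ) + 𝔚` and `𝔛(λ') = 𝔛(κ') + (n + e - 1 - 𝔚)`, and the threshold `T` of `λ`
reflects to the threshold `n + e - 1 - T` of `λ'`. The left side minus `𝔏_k(κ) + 𝔏_{e-1-k}(κ')`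
thus counts the elements of `𝔚` above `T` and below `T`, which is `w` exactly when `T ∉ 𝔚`,
i.e. when `λ` is `k`-empty; the same reflection at `T` gives the equivalence of emptiness.
-/

section

open Multiset

variable {e : ℕ}

theorem mod_reflect_iff {n x z : ℕ} (hx : x < n) (hz : z < n + e) :
    (n - 1 - x) % e = (n + e - 1 - z) % e ↔ x % e = z % e := by
  change (n - 1 - x) ≡ (n + e - 1 - z) [MOD e] ↔ x ≡ z [MOD e]
  have hsum : (n + e - 1 - z) + z = (n - 1 - x) + (x + e) := by omega
  rw [← (Nat.ModEq.refl z).add_iff_right, hsum, (Nat.ModEq.refl _).add_iff_left,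
    Nat.modEq_add_modulus_iff, Nat.ModEq.comm]

theorem div_lt_div_of_mod_eq {b z : ℕ} (hmod : b % e = z % e) (h : b < z) : b / e < z / e := by
  have hb := Nat.div_add_mod b e
  have hz := Nat.div_add_mod z e
  by_contra! hc
  have := Nat.mul_le_mul_left e hc
  omega

theorem add_le_of_mod_eq {x z : ℕ} (hmod : x % e = z % e) (h : x < z) : x + e ≤ z := by
  have hx := Nat.div_add_mod x e
  have hz := Nat.div_add_mod z e
  have := Nat.mul_le_mul_left e (div_lt_div_of_mod_eq hmod h)
  rw [Nat.mul_succ] at this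
  omega

theorem le_range_of_nodup {A : Multiset ℕ} {n : ℕ} (hA : A.Nodup) (hAn : ∀ a ∈ A, a < n) :
    A ≤ range n :=
  (le_iff_subset hA).mpr fun a ha => mem_range.mpr (hAn a ha)

theorem count_map_sub_self {s : Multiset ℕ} {m z : ℕ} (hs : ∀ x ∈ s, x ≤ m) (hz : z ≤ m) :
    (s.map (m - ·)).count (m - z) = s.count z := by
  rw [count_map, count_eq_card_filter_eq]
  exact congrArg card (filter_congr fun x hx => by have := hs x hx; omega)

theorem List.getElem_add_sub_le_of_pairwise_gt {l : List ℕ} (hl : l.Pairwise (· > ·)) {i j : ℕ}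
    (hij : i ≤ j) (hj : j < l.length) : l[j] + (j - i) ≤ l[i] := by
  induction j, hij using Nat.le_induction with
  | base => simp
  | succ j hij ih =>
    have hstep := List.pairwise_iff_getElem.mp hl j (j + 1) (by omega) hj (Nat.lt_succ_self j)
    have := ih (by omega)
    omega

theorem mem_chain_iff (he : 0 < e) {b z : ℕ} :
    z ∈ (range (b / e + 1)).map (fun j => b - j * e) ↔ b % e = z % e ∧ z ≤ b := by
  simp only [mem_map, mem_range, Nat.lt_succ_iff, Nat.le_div_iff_mul_le he]
  constructor
  · rintro ⟨j, hj, rfl⟩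
    rw [Nat.mul_comm] at hj ⊢
    exact ⟨(Nat.sub_mul_mod hj).symm, Nat.sub_le _ _⟩
  · rintro ⟨hmod, hzb⟩
    obtain ⟨q, hq⟩ := (Nat.modEq_iff_dvd' hzb).mp hmod.symm
    refine ⟨q, ?_, ?_⟩ <;> rw [Nat.mul_comm] <;> omega

theorem nodup_chain (he : 0 < e) (b : ℕ) :
    ((range (b / e + 1)).map (fun j => b - j * e)).Nodup := by
  refine (nodup_range _).map_on fun i hi j hj hij => ?_
  simp only [mem_range, Nat.lt_succ_iff, Nat.le_div_iff_mul_le he] at hi hj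
  exact Nat.eq_of_mul_eq_mul_right he (by omega)

theorem count_eExt (he : 0 < e) (A : Multiset ℕ) (z : ℕ) :
    (eExt e A).count z = A.countP (fun b => b % e = z % e ∧ z ≤ b) := by
  induction A using Multiset.induction with
  | empty => simp [eExt]
  | cons a A ih =>
    rw [eExt, cons_bind, count_add, ← eExt, ih, countP_cons, count_eq_of_nodup (nodup_chain he a),
      add_comm]
    simp only [mem_chain_iff he]

theorem lt_of_mem_eExt {A : Multiset ℕ} {n x : ℕ} (hA : A ≤ range n) (hx : x ∈ eExt e A) :
    x < n := by
  obtain ⟨b, hb, hx⟩ := mem_bind.mp hx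
  obtain ⟨j, -, rfl⟩ := mem_map.mp hx
  have := mem_range.mp (mem_of_le hA hb)
  omega

def countBelow (e : ℕ) (A : Multiset ℕ) (z : ℕ) : ℕ :=
  A.countP fun b => b % e = z % e ∧ b < z

theorem count_eExt_add_countBelow (he : 0 < e) (A : Multiset ℕ) (z : ℕ) :
    (eExt e A).count z + countBelow e A z = runnerCount e (z % e) A := by
  rw [count_eExt he, countBelow, runnerCount, ← countP_eq_card_filter]
  induction A using Multiset.induction with
  | empty => simp
  | cons a A ih => simp only [countP_cons]; split_ifs <;> omega

theorem countBelow_le_div {A : Multiset ℕ} (hA : A.Nodup) (z : ℕ) : countBelow e A z ≤ z / e := by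
  have hinj : ∀ b ∈ A.filter (fun b => b % e = z % e ∧ b < z),
      ∀ b' ∈ A.filter (fun b => b % e = z % e ∧ b < z), b / e = b' / e → b = b' := by
    intro b hb b' hb' hdiv
    rw [mem_filter] at hb hb'
    rw [← Nat.div_add_mod b e, ← Nat.div_add_mod b' e, hdiv, hb.2.1, hb'.2.1]
  rw [countBelow, countP_eq_card_filter, ← card_map (· / e), ← card_range (z / e)]
  refine card_le_card ((le_iff_subset ((hA.filter _).map_on hinj)).mpr fun y hy => ?_)
  obtain ⟨b, hb, rfl⟩ := mem_map.mp hy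
  rw [mem_filter] at hb
  exact mem_range.mpr (div_lt_div_of_mod_eq hb.2.1 hb.2.2)

theorem runnerCount_range (he : 0 < e) {ρ : ℕ} (hρ : ρ < e) (n : ℕ) :
    runnerCount e ρ (range n) = (n + e - 1 - ρ) / e := by
  have hcount := Nat.count_modEq_card n he ρ
  rw [Nat.count_eq_card_filter_range, Nat.mod_eq_of_lt hρ] at hcount
  have hn := Nat.div_add_mod n e
  have hsplit : n + e - 1 - ρ = (n % e + e - 1 - ρ) + e * (n / e) := by omega
  have hrem : (n % e + e - 1 - ρ) / e = if ρ < n % e then 1 else 0 := by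
    split_ifs with h
    · exact Nat.div_eq_of_lt_le (by omega) (by have := Nat.mod_lt n he; omega)
    · exact Nat.div_eq_of_lt (by omega)
  rw [hsplit, Nat.add_mul_div_left _ _ he, hrem, add_comm, ← hcount, runnerCount,
    ← Finset.range_val, ← Finset.filter_val, Finset.card_val]
  exact congrArg Finset.card (Finset.filter_congr fun x _ => by rw [Nat.ModEq, Nat.mod_eq_of_lt hρ])

theorem sum_runnerCount (he : 0 < e) (A : Multiset ℕ) :
    ∑ ρ ∈ Finset.range e, runnerCount e ρ A = card A := by
  rw [← card_map (· % e) A, ← sum_count_eq_card fun ρ hρ => ?_]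
  · refine Finset.sum_congr rfl fun ρ _ => ?_
    rw [runnerCount, count_map]
    exact congrArg card (filter_congr fun b _ => eq_comm)
  · obtain ⟨b, -, rfl⟩ := mem_map.mp hρ
    exact Finset.mem_range.mpr (Nat.mod_lt b he)

theorem runnerCount_mul_le (he : 0 < e) {A : Multiset ℕ} {n d : ℕ} (hA : A ≤ range n)
    (hd : d < e) : runnerCount e d A * e ≤ n + e - 1 - d := by
  have hc : runnerCount e d A ≤ runnerCount e d (range n) := card_le_card (filter_le_filter _ hA)
  rw [runnerCount_range he hd] at hc
  exact (Nat.mul_le_mul_right e hc).trans (Nat.div_mul_le_self _ _)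

theorem filter_coreBeta (A : Multiset ℕ) {ρ : ℕ} (hρ : ρ < e) :
    (coreBeta e A).filter (· % e = ρ) = (range (runnerCount e ρ A)).map (ρ + · * e) := by
  have hfib : ∀ j ∈ range e, ((range (runnerCount e j A)).map (j + · * e)).filter (· % e = ρ)
      = if j = ρ then (range (runnerCount e j A)).map (j + · * e) else 0 := by
    intro j hj
    have hmod : ∀ i, (j + i * e) % e = j := fun i => by
      rw [Nat.add_mul_mod_self_right, Nat.mod_eq_of_lt (mem_range.mp hj)]
    split_ifs with h
    · exact filter_eq_self.mpr fun x hx => by obtain ⟨i, -, rfl⟩ := mem_map.mp hx; rw [hmod, h]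
    · exact filter_eq_nil.mpr fun x hx => by obtain ⟨i, -, rfl⟩ := mem_map.mp hx; rw [hmod]; exact h
  rw [coreBeta, filter_bind, bind_congr hfib, Multiset.bind, Multiset.join, ← Finset.range_val,
    ← Finset.sum_eq_multiset_sum, Finset.sum_ite_eq', if_pos (Finset.mem_range.mpr hρ)]

theorem runnerCount_coreBeta_s11 (A : Multiset ℕ) {ρ : ℕ} (hρ : ρ < e) :
    runnerCount e ρ (coreBeta e A) = runnerCount e ρ A := by
  rw [runnerCount, filter_coreBeta A hρ, card_map, card_range]

theorem count_eExt_coreBeta (he : 0 < e) (A : Multiset ℕ) (z : ℕ) :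
    (eExt e (coreBeta e A)).count z = runnerCount e (z % e) A - z / e := by
  have hz := Nat.div_add_mod z e
  have hle : ∀ i, z ≤ z % e + i * e ↔ z / e ≤ i := fun i => by
    rw [← Nat.mul_le_mul_left_iff (n := z / e) (m := i) he, Nat.mul_comm i]; omega
  have hIco : (range (runnerCount e (z % e) A)).filter (z / e ≤ ·)
      = (Finset.Ico (z / e) (runnerCount e (z % e) A)).val := by
    rw [← Finset.range_val, ← Finset.filter_val]
    congr 1
    ext i
    simp only [Finset.mem_filter, Finset.mem_range, Finset.mem_Ico]
    omega
  rw [count_eExt he, countP_congr rfl fun b _ => propext and_comm, ← countP_filter,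
    filter_coreBeta A (Nat.mod_lt z he), countP_map, filter_congr fun i _ => hle i, hIco,
    Finset.card_val, Nat.card_Ico]

theorem coreBeta_nodup (he : 0 < e) (A : Multiset ℕ) : (coreBeta e A).Nodup := by
  refine nodup_iff_count_le_one.mpr fun x => ?_
  rw [← count_filter_of_pos (p := (· % e = x % e)) rfl, filter_coreBeta A (Nat.mod_lt x he)]
  refine nodup_iff_count_le_one.mp ((nodup_range _).map fun i j hij => ?_) x
  exact Nat.eq_of_mul_eq_mul_right he (by simpa using hij)

theorem card_coreBeta (he : 0 < e) (A : Multiset ℕ) : card (coreBeta e A) = card A := by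
  rw [coreBeta, card_bind, ← sum_runnerCount he A, ← Finset.range_val,
    ← Finset.sum_eq_multiset_sum]
  simp

theorem coreBeta_le_range (he : 0 < e) {A : Multiset ℕ} {n : ℕ} (hA : A ≤ range n) :
    coreBeta e A ≤ range n := by
  refine le_range_of_nodup (coreBeta_nodup he A) fun x hx => ?_
  have hx' : x ∈ (coreBeta e A).filter (· % e = x % e) := mem_filter.mpr ⟨hx, rfl⟩
  rw [filter_coreBeta A (Nat.mod_lt x he)] at hx'
  obtain ⟨i, hi, hxi⟩ := mem_map.mp hx'
  have hle := runnerCount_mul_le he hA (Nat.mod_lt x he)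
  have := Nat.mul_le_mul_right e (mem_range.mp hi)
  rw [Nat.succ_mul] at this
  omega

-- The beta-set of the conjugate partition, by `betaSet_conj`.
def dualBeta (n : ℕ) (A : Multiset ℕ) : Multiset ℕ :=
  (range n - A).map (n - 1 - ·)

theorem dualBeta_le_range (n : ℕ) (A : Multiset ℕ) : dualBeta n A ≤ range n := by
  have hsub : ∀ x ∈ range n - A, x < n := fun x hx => mem_range.mp (mem_of_le tsub_le_self hx)
  refine le_range_of_nodup ((nodup_of_le tsub_le_self (nodup_range n)).map_on
    fun x hx y hy h => ?_) fun y hy => ?_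
  · have := hsub x hx; have := hsub y hy; omega
  · obtain ⟨x, hx, rfl⟩ := mem_map.mp hy
    have := hsub x hx
    omega

theorem countP_dualBeta {A : Multiset ℕ} {n : ℕ} (hA : A ≤ range n) (p : ℕ → Prop)
    [DecidablePred p] :
    (dualBeta n A).countP p
      = (range n).countP (fun x => p (n - 1 - x)) - A.countP (fun x => p (n - 1 - x)) := by
  rw [dualBeta, countP_map, ← countP_eq_card_filter, countP_sub hA]

theorem count_eExt_dualBeta (he : 0 < e) {A : Multiset ℕ} {n z : ℕ} (hA : A ≤ range n)
    (hz : z < n + e) :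
    (eExt e (dualBeta n A)).count (n + e - 1 - z) + countBelow e A z
      = countBelow e (range n) z := by
  have hpred : ∀ x ∈ range n,
      ((n - 1 - x) % e = (n + e - 1 - z) % e ∧ n + e - 1 - z ≤ n - 1 - x)
        = (x % e = z % e ∧ x < z) := fun x hx => by
    have hx := mem_range.mp hx
    rw [mod_reflect_iff hx hz]
    refine propext ⟨fun h => ⟨h.1, by omega⟩, fun h => ⟨h.1, ?_⟩⟩
    have := add_le_of_mod_eq h.1 h.2
    omega
  rw [count_eExt he, countP_dualBeta hA, countBelow, countBelow, countP_congr rfl hpred,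
    countP_congr rfl fun x hx => hpred x (mem_of_le hA hx)]
  have := countP_le_of_le (fun x => x % e = z % e ∧ x < z) hA
  omega

theorem runnerCount_dualBeta {A : Multiset ℕ} {n d : ℕ} (hA : A ≤ range n) (hd : d < e) :
    runnerCount e ((n + e - 1 - d) % e) (dualBeta n A)
      = runnerCount e d (range n) - runnerCount e d A := by
  have hpred : ∀ x ∈ range n, ((n - 1 - x) % e = (n + e - 1 - d) % e) = (x % e = d) :=
    fun x hx => by rw [mod_reflect_iff (mem_range.mp hx) (by omega), Nat.mod_eq_of_lt hd]
  simp only [runnerCount, ← countP_eq_card_filter]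
  rw [countP_dualBeta hA, countP_congr rfl hpred,
    countP_congr rfl fun x hx => hpred x (mem_of_le hA hx)]

-- The position `d + c·e` in the definitions of `KEmpty` and `Lk`: the first gap on runner `d`
-- once all beads are slid up.
def firstGap (e d : ℕ) (A : Multiset ℕ) : ℕ :=
  d + runnerCount e d A * e

theorem firstGap_mod (A : Multiset ℕ) {d : ℕ} (hd : d < e) : firstGap e d A % e = d := by
  rw [firstGap, Nat.add_mul_mod_self_right, Nat.mod_eq_of_lt hd]

theorem firstGap_div (he : 0 < e) (A : Multiset ℕ) {d : ℕ} (hd : d < e) :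
    firstGap e d A / e = runnerCount e d A := by
  rw [firstGap, Nat.add_mul_div_right _ _ he, Nat.div_eq_of_lt hd, Nat.zero_add]

theorem firstGap_coreBeta (A : Multiset ℕ) {d : ℕ} (hd : d < e) :
    firstGap e d (coreBeta e A) = firstGap e d A := by
  rw [firstGap, firstGap, runnerCount_coreBeta_s11 A hd]

theorem firstGap_lt (he : 0 < e) {A : Multiset ℕ} {n d : ℕ} (hA : A ≤ range n) (hd : d < e) :
    firstGap e d A < n + e := by
  have := runnerCount_mul_le he hA hd
  rw [firstGap]
  omega

theorem firstGap_dualBeta (he : 0 < e) {A : Multiset ℕ} {n d : ℕ} (hA : A ≤ range n)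
    (hd : d < e) :
    firstGap e ((n + e - 1 - d) % e) (dualBeta n A) = n + e - 1 - firstGap e d A := by
  have hc : runnerCount e d A * e ≤ runnerCount e d (range n) * e :=
    Nat.mul_le_mul_right e (card_le_card (filter_le_filter _ hA))
  have hdiv := Nat.div_add_mod' (n + e - 1 - d) e
  rw [firstGap, firstGap, runnerCount_dualBeta hA hd, Nat.sub_mul]
  rw [runnerCount_range he hd] at hc ⊢
  omega

theorem eExt_coreBeta_le (he : 0 < e) {A : Multiset ℕ} (hA : A.Nodup) :
    eExt e (coreBeta e A) ≤ eExt e A := by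
  refine le_iff_count.mpr fun z => ?_
  have := count_eExt_add_countBelow he A z
  have := countBelow_le_div (e := e) hA z
  rw [count_eExt_coreBeta he]
  omega

theorem eExt_eq_coreBeta_add_weightMS (he : 0 < e) {A : Multiset ℕ} (hA : A.Nodup) :
    eExt e A = eExt e (coreBeta e A) + weightMS e A :=
  (add_tsub_cancel_of_le (eExt_coreBeta_le he hA)).symm

theorem lt_of_mem_weightMS {A : Multiset ℕ} {n w : ℕ} (hA : A ≤ range n)
    (hw : w ∈ weightMS e A) : w < n :=
  lt_of_mem_eExt hA (mem_of_le tsub_le_self hw)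

theorem eExt_dualBeta_eq (he : 0 < e) {A : Multiset ℕ} {n : ℕ} (hA : A ≤ range n) :
    eExt e (dualBeta n A)
      = eExt e (dualBeta n (coreBeta e A)) + (weightMS e A).map (n + e - 1 - ·) := by
  ext y
  rw [count_add]
  by_cases hy : y < n + e
  · obtain ⟨z, hz, rfl⟩ : ∃ z < n + e, y = n + e - 1 - z := ⟨n + e - 1 - y, by omega, by omega⟩
    rw [count_map_sub_self (fun w hw => by have := lt_of_mem_weightMS hA hw; omega) (by omega),
      weightMS, count_sub]
    have h1 := count_eExt_dualBeta he hA hz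
    have h2 := count_eExt_dualBeta he (coreBeta_le_range he hA) hz
    have h3 := count_eExt_add_countBelow he A z
    have h4 := count_eExt_add_countBelow he (coreBeta e A) z
    rw [runnerCount_coreBeta_s11 A (Nat.mod_lt z he)] at h4
    have h5 := le_iff_count.mp (eExt_coreBeta_le he (nodup_of_le hA (nodup_range n))) z
    omega
  · have hzero : ∀ M, M ≤ range n → (eExt e M).count y = 0 := fun M hM =>
      count_eq_zero.mpr fun hm => by have := lt_of_mem_eExt hM hm; omega
    rw [hzero _ (dualBeta_le_range n A), hzero _ (dualBeta_le_range n _),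
      count_eq_zero.mpr fun hm => ?_]
    obtain ⟨w, -, rfl⟩ := mem_map.mp hm
    omega

theorem count_eExt_dualBeta_firstGap (he : 0 < e) {A : Multiset ℕ} {n d : ℕ}
    (hA : A ≤ range n) (hd : d < e) :
    (eExt e (dualBeta n A)).count (n + e - 1 - firstGap e d A)
      = (eExt e A).count (firstGap e d A) := by
  have hT := firstGap_lt he hA hd
  have hcore : (eExt e (coreBeta e A)).count (firstGap e d A) = 0 := by
    rw [count_eExt_coreBeta he, firstGap_mod A hd, firstGap_div he A hd, Nat.sub_self]
  have hcore' : (eExt e (dualBeta n (coreBeta e A))).count (n + e - 1 - firstGap e d A) = 0 := by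
    have h1 := count_eExt_dualBeta he (coreBeta_le_range he hA) hT
    have h2 := count_eExt_add_countBelow he (coreBeta e A) (firstGap e d A)
    have h3 := countBelow_le_div (e := e) (nodup_range n) (firstGap e d A)
    rw [hcore, firstGap_mod A hd, runnerCount_coreBeta_s11 A hd] at h2
    rw [firstGap_div he A hd] at h3
    omega
  rw [eExt_dualBeta_eq he hA, count_add, hcore',
    count_map_sub_self (fun w hw => by have := lt_of_mem_weightMS hA hw; omega) (by omega),
    eExt_eq_coreBeta_add_weightMS he (nodup_of_le hA (nodup_range n)), count_add, hcore]

theorem card_filter_eExt_add_card_filter_eExt_dualBeta (he : 0 < e) {A : Multiset ℕ} {n T : ℕ}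
    (hA : A ≤ range n) (hT : T < n + e) (hTA : (eExt e A).count T = 0) :
    card ((eExt e A).filter (T < ·)) + card ((eExt e (dualBeta n A)).filter (n + e - 1 - T < ·))
      = card ((eExt e (coreBeta e A)).filter (T < ·))
        + card ((eExt e (dualBeta n (coreBeta e A))).filter (n + e - 1 - T < ·))
        + card (weightMS e A) := by
  have hTW : T ∉ weightMS e A := by
    rw [← count_eq_zero, weightMS, count_sub, hTA, Nat.zero_sub]
  have hreflect : card ((weightMS e A).filter ((n + e - 1 - T < ·) ∘ (n + e - 1 - ·)))
      = (weightMS e A).countP (¬ T < ·) := by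
    rw [← countP_eq_card_filter]
    refine countP_congr rfl fun w hw => ?_
    have := lt_of_mem_weightMS hA hw
    have : w ≠ T := fun h => hTW (h ▸ hw)
    simp only [Function.comp_apply, eq_iff_iff]
    omega
  rw [eExt_eq_coreBeta_add_weightMS he (nodup_of_le hA (nodup_range n)), eExt_dualBeta_eq he hA,
    filter_add, filter_add, card_add, card_add, filter_map, card_map, hreflect,
    card_eq_countP_add_countP (T < ·) (weightMS e A)]
  simp only [countP_eq_card_filter]
  omega

theorem lt_conj_iff {f : ℕ → ℕ} (hf : IsPartition f) {i j : ℕ} : i < conj f j ↔ j < f i := by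
  obtain ⟨hanti, N, hN⟩ := hf
  have hex : ∃ m, f m ≤ j := ⟨N, by rw [hN N le_rfl]; omega⟩
  have hset : {i | j + 1 ≤ f i} = Set.Iio (Nat.find hex) := by
    ext i
    simp only [Set.mem_ofPred_eq, Set.mem_Iio, Nat.lt_find_iff, not_le]
    exact ⟨fun h m hm => lt_of_lt_of_le h (hanti hm), fun h => h i le_rfl⟩
  have hconj : conj f j = Nat.find hex := by
    change Nat.card {i | j + 1 ≤ f i} = _
    rw [hset]
    simp
  rw [hconj, Nat.lt_find_iff]
  exact ⟨fun h => not_le.mp (h i le_rfl), fun h m hm => not_le.mpr (lt_of_lt_of_le h (hanti hm))⟩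

theorem conj_antitone {f : ℕ → ℕ} (hf : IsPartition f) : Antitone (conj f) := by
  intro j j' hjj'
  by_contra! h
  have := (lt_conj_iff hf).mp h
  exact lt_irrefl _ ((lt_conj_iff hf).mpr (lt_of_le_of_lt hjj' this))

theorem conj_zero_le {f : ℕ → ℕ} (hf : IsPartition f) {r : ℕ} (hr : f r = 0) : conj f 0 ≤ r := by
  by_contra! h
  have := (lt_conj_iff hf).mp h
  omega

theorem betaSet_nodup {f : ℕ → ℕ} (hf : Antitone f) (r : ℕ) : (betaSet f r).Nodup := by
  refine (nodup_range r).map_on fun i hi j hj hij => ?_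
  rw [mem_range] at hi hj
  rcases le_total i j with h | h
  · have := hf h; omega
  · have := hf h; omega

theorem betaSet_le_range {f : ℕ → ℕ} (hf : IsPartition f) {r s : ℕ} (hs : f 0 ≤ s) :
    betaSet f r ≤ range (r + s) := by
  refine le_range_of_nodup (betaSet_nodup hf.1 r) fun b hb => ?_
  obtain ⟨i, hi, rfl⟩ := mem_map.mp hb
  have := hf.1 (Nat.zero_le i)
  have := mem_range.mp hi
  omega

theorem card_betaSet (f : ℕ → ℕ) (r : ℕ) : card (betaSet f r) = r := by
  simp [betaSet]

theorem betaSet_conj {f : ℕ → ℕ} (hf : IsPartition f) {r s : ℕ} (hr : conj f 0 ≤ r)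
    (hs : f 0 ≤ s) : betaSet (conj f) s = dualBeta (r + s) (betaSet f r) := by
  have hconj : ∀ j, conj f j ≤ r := fun j => (conj_antitone hf (Nat.zero_le j)).trans hr
  set D := (betaSet (conj f) s).map (r + s - 1 - ·) with hD
  have hmemD : ∀ x ∈ D, ∃ j < s, x = r + j - conj f j := fun x hx => by
    obtain ⟨y, hy, rfl⟩ := mem_map.mp hx
    obtain ⟨j, hj, rfl⟩ := mem_map.mp hy
    have := hconj j
    have := mem_range.mp hj
    exact ⟨j, this, by omega⟩
  have hDnodup : D.Nodup := by
    refine (betaSet_nodup (conj_antitone hf) s).map_on fun x hx y hy hxy => ?_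
    obtain ⟨i, hi, rfl⟩ := mem_map.mp hx
    obtain ⟨j, hj, rfl⟩ := mem_map.mp hy
    have := hconj i
    have := hconj j
    have := mem_range.mp hi
    have := mem_range.mp hj
    omega
  have hdisj : Disjoint (betaSet f r) D := by
    refine disjoint_left.mpr fun hb hbD => ?_
    obtain ⟨i, hi, rfl⟩ := mem_map.mp hb
    obtain ⟨j, hj, hij⟩ := hmemD _ hbD
    have := hconj j
    have := mem_range.mp hi
    have := (lt_conj_iff hf (i := i) (j := j))
    omega
  have hsum : betaSet f r + D = range (r + s) := by
    have hnodup := nodup_add.mpr ⟨betaSet_nodup hf.1 r, hDnodup, hdisj⟩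
    refine eq_of_le_of_card_le (le_range_of_nodup hnodup fun x hx => ?_)
      (by simp [hD, card_betaSet])
    rcases mem_add.mp hx with hx | hx
    · exact mem_range.mp (mem_of_le (betaSet_le_range hf hs) hx)
    · obtain ⟨j, hj, rfl⟩ := hmemD x hx
      have := hconj j
      omega
  rw [dualBeta, ← hsum, add_tsub_cancel_left, hD, map_map]
  refine (map_congr rfl fun y hy => ?_).trans (map_id _) |>.symm
  obtain ⟨j, hj, rfl⟩ := mem_map.mp hy
  have := hconj j
  have := mem_range.mp hj
  simp only [Function.comp_apply, id_eq]
  omega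

theorem pairwise_gt_sort_reverse {C : Multiset ℕ} (hC : C.Nodup) :
    (C.sort (· ≤ ·)).reverse.Pairwise (· > ·) := by
  have hnodup : (C.sort (· ≤ ·)).Nodup := by rwa [← coe_nodup, sort_eq]
  exact List.pairwise_reverse.mpr
    (((pairwise_sort C _).and hnodup).imp fun h => lt_of_le_of_ne h.1 h.2)

theorem sub_le_getElem_sort_reverse {C : Multiset ℕ} (hC : C.Nodup) {i : ℕ}
    (hi : i < (C.sort (· ≤ ·)).reverse.length) :
    card C - 1 - i ≤ (C.sort (· ≤ ·)).reverse[i] := by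
  have hlen : (C.sort (· ≤ ·)).reverse.length = card C := by simp
  have := List.getElem_add_sub_le_of_pairwise_gt (pairwise_gt_sort_reverse hC)
    (show i ≤ card C - 1 by omega) (by omega)
  omega

theorem partOfBeta_eq_zero {C : Multiset ℕ} {i : ℕ} (hi : card C ≤ i) : partOfBeta C i = 0 := by
  rw [partOfBeta, List.getD_eq_default _ _ (by simpa using hi), Nat.zero_sub]

theorem partOfBeta_isPartition {C : Multiset ℕ} (hC : C.Nodup) : IsPartition (partOfBeta C) := by
  refine ⟨fun i j hij => ?_, card C, fun i hi => partOfBeta_eq_zero hi⟩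
  have hlen : (C.sort (· ≤ ·)).reverse.length = card C := by simp
  by_cases hj : j < card C
  · have hgap := List.getElem_add_sub_le_of_pairwise_gt (pairwise_gt_sort_reverse hC) hij
      (hlen ▸ hj)
    have hlast := sub_le_getElem_sort_reverse hC (hlen ▸ hj)
    simp only [partOfBeta, List.getD_eq_getElem _ _ (hlen ▸ hj),
      List.getD_eq_getElem _ _ (show i < (C.sort (· ≤ ·)).reverse.length by omega)]
    omega
  · rw [partOfBeta_eq_zero (not_lt.mp hj)]
    exact Nat.zero_le _

theorem betaSet_partOfBeta {C : Multiset ℕ} (hC : C.Nodup) :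
    betaSet (partOfBeta C) (card C) = C := by
  have hlen : (C.sort (· ≤ ·)).reverse.length = card C := by simp
  have hmap : betaSet (partOfBeta C) (card C) = ((List.range (card C)).map
      ((C.sort (· ≤ ·)).reverse.getD · 0) : List ℕ) := by
    rw [betaSet, ← coe_range, map_coe]
    refine congrArg _ (List.map_congr_left fun i hi => ?_)
    have hi : i < (C.sort (· ≤ ·)).reverse.length := by simpa [hlen] using hi
    have := sub_le_getElem_sort_reverse hC hi
    simp only [partOfBeta, List.getD_eq_getElem _ _ hi]
    omega
  have hlist : (List.range (card C)).map ((C.sort (· ≤ ·)).reverse.getD · 0)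
      = (C.sort (· ≤ ·)).reverse :=
    List.ext_getElem (by simp) fun i _ hi => by simp [List.getElem?_eq_getElem hi]
  rw [hmap, hlist, coe_reverse, sort_eq]

theorem partOfBeta_zero_le {C : Multiset ℕ} {s : ℕ} (hCs : C ≤ range (card C + s)) :
    partOfBeta C 0 ≤ s := by
  rcases Nat.eq_zero_or_pos (card C) with h | h
  · rw [partOfBeta_eq_zero (by omega)]
    exact Nat.zero_le _
  · have hlen : (C.sort (· ≤ ·)).reverse.length = card C := by simp
    have hmem : (C.sort (· ≤ ·)).reverse[0]'(by omega) ∈ C := by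
      rw [← mem_sort (r := (· ≤ ·)), ← List.mem_reverse]
      exact List.getElem_mem _
    have := mem_range.mp (mem_of_le hCs hmem)
    rw [partOfBeta, List.getD_eq_getElem _ _ (by omega)]
    omega

theorem betaSet_conj_partOfBeta {C : Multiset ℕ} (hC : C.Nodup) {s : ℕ}
    (hCs : C ≤ range (card C + s)) :
    betaSet (conj (partOfBeta C)) s = dualBeta (card C + s) C := by
  have hpart := partOfBeta_isPartition hC
  rw [betaSet_conj hpart (conj_zero_le hpart (partOfBeta_eq_zero le_rfl)) (partOfBeta_zero_le hCs),
    betaSet_partOfBeta hC]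

theorem kEmpty_iff_count_eExt (he : 0 < e) (k r : ℕ) (f : ℕ → ℕ) :
    KEmpty e k r f ↔
      (eExt e (betaSet f r)).count (firstGap e ((r + k) % e) (betaSet f r)) = 0 := by
  rw [count_eExt he, countP_eq_zero, firstGap_mod _ (Nat.mod_lt _ he)]
  simp only [KEmpty, firstGap, not_and, not_le]

theorem Lk_eq_card_filter (k r : ℕ) (f : ℕ → ℕ) :
    Lk e k r f
      = card ((eExt e (betaSet f r)).filter (firstGap e ((r + k) % e) (betaSet f r) < ·)) :=
  rfl

end

/-- λ is k-empty iff λ' is (e-1-k)-empty, and in that case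
𝔏_k(λ) + 𝔏_{e-1-k}(λ') = 𝔏_k(κ) + 𝔏_{e-1-k}(κ') + w, where κ is the e-core and w
the e-weight of λ. -/
theorem stmt11 (e : ℕ) (he : 2 ≤ e) (k : ℕ) (hk : k < e) (f : ℕ → ℕ)
    (hf : IsPartition f) (r s : ℕ) (hr : conj f 0 ≤ r) (hs : f 0 ≤ s) :
    (KEmpty e k r f ↔ KEmpty e (e - 1 - k) s (conj f)) ∧
    (KEmpty e k r f →
      Lk e k r f + Lk e (e - 1 - k) s (conj f)
        = Lk e k r (partOfBeta (coreBeta e (betaSet f r)))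
          + Lk e (e - 1 - k) s (conj (partOfBeta (coreBeta e (betaSet f r))))
          + eWeight e (betaSet f r)) := by
  have he0 : 0 < e := by omega
  have hd : (r + k) % e < e := Nat.mod_lt _ he0
  have hB : betaSet f r ≤ Multiset.range (r + s) := betaSet_le_range hf hs
  have hK : coreBeta e (betaSet f r) ≤ Multiset.range (r + s) := coreBeta_le_range he0 hB
  have hKcard : Multiset.card (coreBeta e (betaSet f r)) = r := by
    rw [card_coreBeta he0, card_betaSet]
  have hKnodup := coreBeta_nodup he0 (betaSet f r)
  have hκbeta : betaSet (partOfBeta (coreBeta e (betaSet f r))) r = coreBeta e (betaSet f r) := by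
    simpa only [hKcard] using betaSet_partOfBeta hKnodup
  have hκconj : betaSet (conj (partOfBeta (coreBeta e (betaSet f r)))) s
      = dualBeta (r + s) (coreBeta e (betaSet f r)) := by
    simpa only [hKcard] using betaSet_conj_partOfBeta hKnodup (by rwa [hKcard])
  have hdual : (s + (e - 1 - k)) % e = (r + s + e - 1 - (r + k) % e) % e := by
    have := Nat.div_add_mod (r + k) e
    rw [show r + s + e - 1 - (r + k) % e = s + (e - 1 - k) + e * ((r + k) / e) by omega,
      Nat.add_mul_mod_self_left]
  simp only [Lk_eq_card_filter, kEmpty_iff_count_eExt he0, betaSet_conj hf hr hs, hκbeta, hκconj,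
    hdual, firstGap_dualBeta he0 hB hd, firstGap_dualBeta he0 hK hd, firstGap_coreBeta _ hd,
    count_eExt_dualBeta_firstGap he0 hB hd]
  exact ⟨trivial, card_filter_eExt_add_card_filter_eExt_dualBeta he0 hB (firstGap_lt he0 hB hd)⟩
end
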